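/- As a formal power series identity in x over ℚ(s): 1/s = (1/(2s))·Ψ(x/s) + (1/(2(s−x)))·Ψ(x/(s−x)), where Ψ(z) = Σ_{k≥0} E_k(0) z^k and 1/(s−x), x/(s−x) are expanded as geometric series in x/s. -/

import Mathlib

/-!
Comparing coefficients of `xᴺ`, every term is a rational multiple of `s^{-(N+1)}`. Since
`x/(s-x) = x · 1/(s-x)`, the `xᴺ`-coefficient of `(1/(s-x)) · (x/(s-x))ᵏ` is `C(N,k) s^{-(N+1)}`, so
the identity reduces to `E_N(0) + ∑ₖ C(N,k) E_k(0) = 2·0ᴺ`, i.e. `E_N(0) + E_N(1) = 2·0ᴺ`.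

The explicit formula for `E_k(0)` is `2/(2 + Δ) = 2/(1 + T)` (with `T = 1 + Δ` the shift) applied
to `xⁿ` and evaluated at `0`, the geometric series in `-Δ/2` being finite because `Δⁿ⁺¹ xⁿ = 0`.
Hence `(1 + T) Eₙ = 2xⁿ`, and `T` commutes with `Δ`, which gives `Eₙ(1) = ∑ₖ C(n,k) E_k(0)`.
-/

/-- `E_k(0)`, the value at `0` of the `k`-th Euler polynomial
(defined by `2/(1+eᵗ) = ∑_k E_k(0) tᵏ/k!`), via the explicit formula. -/
noncomputable def eulerZero (k : ℕ) : ℚ :=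
  ∑ i ∈ Finset.range (k + 1), (2 : ℚ)⁻¹ ^ i *
    ∑ j ∈ Finset.range (i + 1), (-1 : ℚ) ^ j * (i.choose j : ℚ) * (j : ℚ) ^ k

/-- Formal composition `F ∘ G` of power series (intended for `G` with zero constant
term, in which case `coeff N (G^k) = 0` for `k > N` and the truncation is exact). -/
noncomputable def composePS {K : Type*} [CommRing K] (F G : PowerSeries K) : PowerSeries K :=
  PowerSeries.mk fun N =>
    ∑ k ∈ Finset.range (N + 1), PowerSeries.coeff k F * PowerSeries.coeff N (G ^ k)

/-- The formal power series `Ψ(z) = ∑_{k≥0} E_k(0) zᵏ`, over the field `ℚ(s)` of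
rational functions (`s = RatFunc.X`). -/
noncomputable def PsiPS : PowerSeries (RatFunc ℚ) :=
  PowerSeries.mk fun k => RatFunc.C (eulerZero k)

/-- The series `Ψ(x/s) = ∑_k E_k(0) xᵏ/sᵏ`, a power series in `x` over `ℚ(s)`. -/
noncomputable def PsiXS : PowerSeries (RatFunc ℚ) :=
  PowerSeries.mk fun k => RatFunc.C (eulerZero k) * (RatFunc.X)⁻¹ ^ k

/-- The formal expansion `x/(s-x) = ∑_{j≥1} xʲ/sʲ` as a power series in `x`. -/
noncomputable def xOverSMinusX : PowerSeries (RatFunc ℚ) :=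
  PowerSeries.mk fun j => if j = 0 then 0 else (RatFunc.X)⁻¹ ^ j

/-- The formal expansion `1/(s-x) = ∑_{j≥0} xʲ/s^{j+1}` as a power series in `x`. -/
noncomputable def oneOverSMinusX : PowerSeries (RatFunc ℚ) :=
  PowerSeries.mk fun j => (RatFunc.X)⁻¹ ^ (j + 1)

open Finset PowerSeries

theorem sum_neg_half_pow_smul_fwdDiff_iter_add_shift {M G : Type*} [AddCommMonoid M]
    [AddCommGroup G] [Module ℚ G] (h : M) (f : M → G) (n : ℕ) (y : M)
    (hf : (fwdDiff h)^[n + 1] f y = 0) :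
    ∑ i ∈ range (n + 1), (-2⁻¹ : ℚ) ^ i • (fwdDiff h)^[i] f (y + h)
      + ∑ i ∈ range (n + 1), (-2⁻¹ : ℚ) ^ i • (fwdDiff h)^[i] f y = (2 : ℚ) • f y := by
  set a : ℕ → G := fun i ↦ (2 : ℚ) • (-2⁻¹ : ℚ) ^ i • (fwdDiff h)^[i] f y
  have hstep : ∀ i ∈ range (n + 1),
      (-2⁻¹ : ℚ) ^ i • (fwdDiff h)^[i] f (y + h) + (-2⁻¹ : ℚ) ^ i • (fwdDiff h)^[i] f y
        = a i - a (i + 1) := by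
    intro i _
    have hshift : (fwdDiff h)^[i] f (y + h) = (fwdDiff h)^[i] f y + (fwdDiff h)^[i + 1] f y := by
      rw [Function.iterate_succ_apply', fwdDiff, add_sub_cancel]
    rw [hshift]
    simp only [a, pow_succ]
    module
  rw [← sum_add_distrib, sum_congr rfl hstep, sum_range_sub']
  simp [a, hf]

/-- The Euler polynomial `Eₙ(y)`. -/
noncomputable def eulerPoly (n : ℕ) (y : ℚ) : ℚ :=
  ∑ i ∈ range (n + 1), (-2⁻¹ : ℚ) ^ i * (fwdDiff 1)^[i] (fun r : ℚ ↦ r ^ n) y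

theorem eulerPoly_eq_sum_of_le {n m : ℕ} (hnm : n ≤ m) (y : ℚ) :
    eulerPoly n y
      = ∑ i ∈ range (m + 1), (-2⁻¹ : ℚ) ^ i * (fwdDiff 1)^[i] (fun r : ℚ ↦ r ^ n) y := by
  refine sum_subset (range_subset_range.mpr (by omega)) fun i hi hni ↦ ?_
  rw [fwdDiff_iter_pow_eq_zero_of_lt (by simp at hi hni; omega), Pi.zero_apply, mul_zero]

theorem eulerPoly_add_one_add (n : ℕ) (y : ℚ) :
    eulerPoly n (y + 1) + eulerPoly n y = 2 * y ^ n := by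
  simpa only [eulerPoly, smul_eq_mul] using
    sum_neg_half_pow_smul_fwdDiff_iter_add_shift 1 (fun r : ℚ ↦ r ^ n) n y
      (by rw [fwdDiff_iter_pow_eq_zero_of_lt (by omega), Pi.zero_apply])

theorem eulerPoly_add_one (n : ℕ) (y : ℚ) :
    eulerPoly n (y + 1) = ∑ k ∈ range (n + 1), (n.choose k : ℚ) * eulerPoly k y := by
  have hshift : ∀ i, (fwdDiff 1)^[i] (fun r : ℚ ↦ r ^ n) (y + 1)
      = ∑ k ∈ range (n + 1), (n.choose k : ℚ) * (fwdDiff 1)^[i] (fun r : ℚ ↦ r ^ k) y := by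
    intro i
    have hbinom : (fun r : ℚ ↦ (r + 1) ^ n)
        = ∑ k ∈ range (n + 1), (n.choose k : ℚ) • fun r : ℚ ↦ r ^ k := by
      ext r
      simp only [add_pow, one_pow, mul_one, Finset.sum_apply, Pi.smul_apply, smul_eq_mul]
      exact sum_congr rfl fun k _ ↦ by ring
    rw [← fwdDiff_iter_comp_add, hbinom]
    simp
  rw [eulerPoly]
  simp only [hshift, mul_sum]
  rw [sum_comm]
  refine sum_congr rfl fun k hk ↦ ?_
  rw [eulerPoly_eq_sum_of_le (Nat.lt_succ_iff.mp (mem_range.mp hk)), mul_sum]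
  exact sum_congr rfl fun i _ ↦ by ring

theorem eulerZero_eq_eulerPoly_zero (n : ℕ) : eulerZero n = eulerPoly n 0 := by
  refine sum_congr rfl fun i _ ↦ ?_
  rw [fwdDiff_iter_eq_sum_shift, mul_sum, mul_sum]
  refine sum_congr rfl fun j hj ↦ ?_
  obtain ⟨d, rfl⟩ := Nat.exists_eq_add_of_le (Nat.lt_succ_iff.mp (mem_range.mp hj))
  have hsq : ((-1 : ℚ) ^ d) ^ 2 = 1 := by rw [← pow_mul, pow_mul']; simp
  simp only [Nat.add_sub_cancel_left, zsmul_eq_mul, nsmul_eq_mul, mul_one, zero_add]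
  push_cast
  rw [show (-2⁻¹ : ℚ) = -1 * 2⁻¹ by ring, mul_pow]
  linear_combination -(2⁻¹ : ℚ) ^ (j + d) * (-1) ^ j * (j + d).choose j * (j : ℚ) ^ n * hsq

theorem eulerZero_add_sum_choose_mul (n : ℕ) :
    eulerZero n + ∑ k ∈ range (n + 1), (n.choose k : ℚ) * eulerZero k = 2 * 0 ^ n := by
  simp_rw [eulerZero_eq_eulerPoly_zero]
  rw [← eulerPoly_add_one, add_comm]
  simpa using eulerPoly_add_one_add n 0

theorem coeff_pow_eq_zero_of_lt {R : Type*} [CommRing R] {G : PowerSeries R}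
    (hG : constantCoeff G = 0) {k m : ℕ} (hm : m < k) : coeff m (G ^ k) = 0 :=
  X_pow_dvd_iff.mp (pow_dvd_pow_of_dvd (X_dvd_iff.mpr hG) k) m hm

theorem coeff_mul_composePS {R : Type*} [CommRing R] (H F G : PowerSeries R)
    (hG : constantCoeff G = 0) (N : ℕ) :
    coeff N (H * composePS F G) = ∑ k ∈ range (N + 1), coeff k F * coeff N (H * G ^ k) := by
  have htrunc : ∀ p ∈ antidiagonal N, coeff p.2 (composePS F G)
      = ∑ k ∈ range (N + 1), coeff k F * coeff p.2 (G ^ k) := by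
    intro p hp
    rw [composePS, coeff_mk]
    refine sum_subset (range_subset_range.mpr ?_) fun k _ hk ↦ ?_
    · have := mem_antidiagonal.mp hp; omega
    · rw [coeff_pow_eq_zero_of_lt hG (by simpa using hk), mul_zero]
  calc coeff N (H * composePS F G)
      = ∑ p ∈ antidiagonal N, ∑ k ∈ range (N + 1),
          coeff k F * (coeff p.1 H * coeff p.2 (G ^ k)) := by
        rw [coeff_mul]
        refine sum_congr rfl fun p hp ↦ ?_
        rw [htrunc p hp, mul_sum]
        exact sum_congr rfl fun k _ ↦ mul_left_comm _ _ _
    _ = ∑ k ∈ range (N + 1), coeff k F * coeff N (H * G ^ k) := by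
        rw [sum_comm]
        simp only [coeff_mul, mul_sum]

local notation "u" => (RatFunc.X : RatFunc ℚ)⁻¹

theorem oneOverSMinusX_eq : oneOverSMinusX = C u * rescale u (mk 1) := by
  ext j
  simp [oneOverSMinusX, pow_succ']

theorem xOverSMinusX_eq : xOverSMinusX = X * oneOverSMinusX := by
  ext j
  rcases j with _ | j <;> simp [xOverSMinusX, oneOverSMinusX, coeff_succ_X_mul]

theorem coeff_oneOverSMinusX_mul_xOverSMinusX_pow (k N : ℕ) :
    coeff N (oneOverSMinusX * xOverSMinusX ^ k) = (N.choose k : RatFunc ℚ) * u ^ (N + 1) := by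
  rw [xOverSMinusX_eq, mul_pow, mul_left_comm, ← pow_succ', coeff_X_pow_mul', oneOverSMinusX_eq,
    mul_pow, ← map_pow, ← map_pow, mk_one_pow_eq_mk_choose_add, coeff_C_mul, coeff_rescale,
    coeff_mk]
  split_ifs with hk
  · obtain ⟨d, rfl⟩ := Nat.exists_eq_add_of_le hk
    rw [Nat.add_sub_cancel_left]
    ring
  · rw [Nat.choose_eq_zero_of_lt (by omega), Nat.cast_zero, zero_mul]

/-- `1/s = (1/(2s))·Ψ(x/s) + (1/(2(s-x)))·Ψ(x/(s-x))` as formal power series in `x`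
over `ℚ(s)`. -/
theorem psi_functional_equation :
    PowerSeries.C (R := RatFunc ℚ) (RatFunc.X)⁻¹
      = PowerSeries.C (R := RatFunc ℚ) ((2 : RatFunc ℚ)⁻¹ * (RatFunc.X)⁻¹) * PsiXS
        + PowerSeries.C (R := RatFunc ℚ) (2 : RatFunc ℚ)⁻¹ * oneOverSMinusX
            * composePS PsiPS xOverSMinusX := by
  ext N
  have hG : constantCoeff xOverSMinusX = 0 := by simp [xOverSMinusX]
  have hrhs : coeff N (PowerSeries.C ((2 : RatFunc ℚ)⁻¹ * u) * PsiXS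
        + PowerSeries.C (2 : RatFunc ℚ)⁻¹ * oneOverSMinusX * composePS PsiPS xOverSMinusX)
      = 2⁻¹ * RatFunc.C (eulerZero N + ∑ k ∈ range (N + 1), (N.choose k : ℚ) * eulerZero k)
          * u ^ (N + 1) := by
    rw [map_add, coeff_C_mul, mul_assoc (C _), coeff_C_mul, coeff_mul_composePS _ _ _ hG]
    simp only [coeff_oneOverSMinusX_mul_xOverSMinusX_pow, PsiXS, PsiPS, coeff_mk, map_add, map_sum,
      map_mul, map_natCast, mul_add, add_mul, mul_sum, sum_mul]
    congr 1
    · ring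
    · exact sum_congr rfl fun _ _ ↦ by ring
  rw [hrhs, eulerZero_add_sum_choose_mul, coeff_C]
  rcases N with _ | N <;> simp
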